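/- Let N ≥ 1, m ∈ ℕ, p ∈ ℋ^m(ℝ^N), and let γ ∈ ℕ^N be a multi-index. If |γ| ≤ m, then ‖∂^γ p‖_{L²(S^{N−1})} ≤ ((2m)^{|γ|} · (m + N/2 − 1)^(|γ|↓))^(1/2) · ‖p‖_{L²(S^{N−1})}; if |γ| > m, then ∂^γ p = 0. -/

import Mathlib

open MvPolynomial MeasureTheory

/-- The multi-index partial derivative `∂^γ` on polynomials. -/
noncomputable def mderiv {N : ℕ} (γ : Fin N → ℕ) :
    Module.End ℂ (MvPolynomial (Fin N) ℂ) :=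
  (List.finRange N).foldr
    (fun j D => ((MvPolynomial.pderiv j).toLinearMap) ^ (γ j) * D) 1

/-- The Laplacian `Δ = Σ_j ∂²/∂x_j²` on polynomials. -/
noncomputable def polyLap {N : ℕ} : Module.End ℂ (MvPolynomial (Fin N) ℂ) :=
  ∑ j : Fin N,
    ((MvPolynomial.pderiv j).toLinearMap * (MvPolynomial.pderiv j).toLinearMap)

/-- The `L²`-norm over the unit sphere `S^{N-1}` (with its standard surface measure)
of the restriction of a polynomial. -/
noncomputable def sphL2 {N : ℕ} (p : MvPolynomial (Fin N) ℂ) : ℝ :=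
  Real.sqrt (∫ ω : Metric.sphere (0 : EuclideanSpace ℝ (Fin N)) 1,
    ‖MvPolynomial.eval (fun j => ((ω : EuclideanSpace ℝ (Fin N)) j : ℂ)) p‖ ^ 2
      ∂((volume : Measure (EuclideanSpace ℝ (Fin N))).toSphere))

/-- The falling factorial `x(x-1)⋯(x-n+1)` of a real number. -/
noncomputable def fallingFactorial (x : ℝ) (n : ℕ) : ℝ :=
  ∏ i ∈ Finset.range n, (x - i)

/-!
For `p ∈ ℋ^m` the heart of the matter is the identity `∑ⱼ ‖∂ⱼp‖² = m (2m + N - 2) ‖p‖²` for the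
`L²(S^{N-1})` norms. It is proved on the Gaussian side: integrating by parts against
`e^{-|x|²/2}` turns `∂ⱼ` into multiplication by `xⱼ`, so Euler's identity `∑ⱼ xⱼ ∂ⱼp̄ = m p̄`
and `Δp̄ = 0` give `∑ⱼ ∫ |∂ⱼp|² e^{-|x|²/2} = m ∫ |p|² e^{-|x|²/2}`. In polar coordinates the
Gaussian norm of a homogeneous polynomial of degree `d` is its sphere norm times the radial moment
`∫₀^∞ r^{2d+N-1} e^{-r²/2} dr`, and consecutive radial moments differ by the factor `2d + N`.

Since `∂ⱼ` maps `ℋ^d` to `ℋ^{d-1}`, writing `∂^γ` as `|γ|` single derivatives and using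
`d (2d + N - 2) ≤ 2m (d + N/2 - 1)` at the current degree `d = m - i` yields the falling
factorial. A derivative of order `> m` passes through a constant and vanishes.
-/

open Real Set Metric

namespace MvPolynomial

variable {R σ : Type*}

theorem IsHomogeneous.eval_smul [CommSemiring R] {φ : MvPolynomial σ R} {n : ℕ}
    (h : φ.IsHomogeneous n) (c : R) (x : σ → R) : eval (c • x) φ = c ^ n * eval x φ := by
  conv_lhs => rw [φ.as_sum]
  conv_rhs => rw [φ.as_sum]
  rw [map_sum, map_sum, Finset.mul_sum]
  refine Finset.sum_congr rfl fun α hα => ?_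
  have hdeg : α.degree = n := by
    rw [Finsupp.degree_eq_weight_one]
    exact h (mem_support_iff.mp hα)
  simp only [eval_monomial, Pi.smul_apply, smul_eq_mul, mul_pow, Finsupp.prod_mul]
  rw [Finsupp.prod, Finset.prod_pow_eq_pow_sum, ← Finsupp.degree_apply, hdeg]
  ring

theorem pderiv_eq_zero_of_isHomogeneous_zero [CommSemiring R] {φ : MvPolynomial σ R}
    (h : φ.IsHomogeneous 0) (i : σ) : pderiv i φ = 0 := by
  rw [← totalDegree_zero_iff_isHomogeneous, totalDegree_eq_zero_iff_eq_C] at h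
  rw [h, pderiv_C]

theorem pderiv_pderiv_comm [CommRing R] (i j : σ) (f : MvPolynomial σ R) :
    pderiv i (pderiv j f) = pderiv j (pderiv i f) := by
  have h : ⁅pderiv i, pderiv j⁆ = (0 : Derivation R (MvPolynomial σ R) (MvPolynomial σ R)) :=
    derivation_ext fun k => by
      classical
      rw [Derivation.commutator_apply, pderiv_X, pderiv_X, Derivation.zero_apply,
        Pi.single_apply, Pi.single_apply]
      split_ifs <;> simp
  rw [← sub_eq_zero, ← Derivation.commutator_apply, h, Derivation.zero_apply]

section IteratedPDeriv

variable [CommSemiring R]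

noncomputable def iteratedPDeriv (l : List σ) : Module.End R (MvPolynomial σ R) :=
  (l.map fun j => (pderiv j).toLinearMap).prod

@[simp]
theorem iteratedPDeriv_nil (f : MvPolynomial σ R) : iteratedPDeriv [] f = f :=
  rfl

@[simp]
theorem iteratedPDeriv_cons (j : σ) (l : List σ) (f : MvPolynomial σ R) :
    iteratedPDeriv (j :: l) f = pderiv j (iteratedPDeriv l f) :=
  rfl

theorem IsHomogeneous.iteratedPDeriv {φ : MvPolynomial σ R} {m : ℕ} (h : φ.IsHomogeneous m)
    (l : List σ) : (iteratedPDeriv l φ).IsHomogeneous (m - l.length) := by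
  induction l with
  | nil => simpa using h
  | cons j l ih => simpa [Nat.sub_add_eq] using ih.pderiv (i := j)

theorem iteratedPDeriv_eq_zero_of_lt {φ : MvPolynomial σ R} {m : ℕ} (h : φ.IsHomogeneous m)
    {l : List σ} (hl : m < l.length) : iteratedPDeriv l φ = 0 := by
  induction l with
  | nil => simp at hl
  | cons j l ih =>
    rw [iteratedPDeriv_cons]
    rcases Nat.lt_or_ge m l.length with hlt | hge
    · rw [ih hlt, map_zero]
    · have h0 := h.iteratedPDeriv l
      rw [show m - l.length = 0 by simp at hl; omega] at h0
      exact pderiv_eq_zero_of_isHomogeneous_zero h0 j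

theorem foldr_pow_mul_eq_iteratedPDeriv (γ : σ → ℕ) (l : List σ) :
    l.foldr (fun j D => (pderiv j).toLinearMap ^ γ j * D) 1 =
      iteratedPDeriv (R := R) (l.flatMap fun j => List.replicate (γ j) j) := by
  induction l with
  | nil => rfl
  | cons j l ih => simp [iteratedPDeriv, ih, List.map_replicate, List.prod_replicate]

end IteratedPDeriv

end MvPolynomial

lemma mderiv_eq_iteratedPDeriv {N : ℕ} (γ : Fin N → ℕ) :
    mderiv γ = iteratedPDeriv ((List.finRange N).flatMap fun j => List.replicate (γ j) j) :=
  foldr_pow_mul_eq_iteratedPDeriv γ _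

lemma length_flatMap_replicate {N : ℕ} (γ : Fin N → ℕ) :
    ((List.finRange N).flatMap fun j => List.replicate (γ j) j).length = ∑ j, γ j := by
  simp [List.length_flatMap, Fin.sum_univ_def]

lemma fallingFactorial_succ (x : ℝ) (n : ℕ) :
    fallingFactorial x (n + 1) = fallingFactorial x n * (x - n) :=
  Finset.prod_range_succ _ _

lemma fallingFactorial_nonneg {x : ℝ} {n : ℕ} (h : (n : ℝ) - 1 ≤ x) :
    0 ≤ fallingFactorial x n :=
  Finset.prod_nonneg fun i hi => by
    have : (i : ℝ) + 1 ≤ n := by exact_mod_cast Finset.mem_range.mp hi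
    linarith

noncomputable def gaussianMoment (n : ℕ) : ℝ := ∫ t : ℝ, t ^ n * exp (-(1 / 2) * t ^ 2)

noncomputable def radialGaussianMoment (k : ℕ) : ℝ :=
  ∫ r in Ioi (0 : ℝ), r ^ k * exp (-(1 / 2) * r ^ 2)

lemma integrable_pow_mul_gaussian (n : ℕ) :
    Integrable fun t : ℝ => t ^ n * exp (-(1 / 2) * t ^ 2) := by
  simpa using integrable_rpow_mul_exp_neg_mul_sq (b := 1 / 2) (by norm_num)
    (s := n) (by linarith [n.cast_nonneg (α := ℝ)])

lemma hasDerivAt_pow_mul_gaussian (n : ℕ) (t : ℝ) :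
    HasDerivAt (fun t : ℝ => t ^ n * exp (-(1 / 2) * t ^ 2))
      (n * (t ^ (n - 1) * exp (-(1 / 2) * t ^ 2)) - t ^ (n + 1) * exp (-(1 / 2) * t ^ 2)) t := by
  have hexp := ((hasDerivAt_pow 2 t).const_mul (-(1 / 2) : ℝ)).exp
  refine ((hasDerivAt_pow n t).mul hexp).congr_deriv ?_
  push_cast
  ring

open Filter in
lemma tendsto_pow_mul_gaussian_atTop (n : ℕ) :
    Tendsto (fun t : ℝ => t ^ n * exp (-(1 / 2) * t ^ 2)) atTop (nhds 0) := by
  have h := rpow_mul_exp_neg_mul_sq_isLittleO_exp_neg (b := 1 / 2) (by norm_num) n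
  simp_rw [rpow_natCast] at h
  exact h.isBigO.trans_tendsto
    (tendsto_exp_atBot.comp (tendsto_id.const_mul_atTop_of_neg (by norm_num)))

open Filter in
lemma tendsto_pow_mul_gaussian_atBot (n : ℕ) :
    Tendsto (fun t : ℝ => t ^ n * exp (-(1 / 2) * t ^ 2)) atBot (nhds 0) := by
  have h := ((tendsto_pow_mul_gaussian_atTop n).comp tendsto_neg_atBot_atTop).const_mul ((-1) ^ n)
  rw [mul_zero] at h
  refine h.congr fun t => ?_
  simp only [Function.comp, neg_sq, ← mul_assoc, ← mul_pow, neg_one_mul, neg_neg]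

lemma gaussianMoment_succ (n : ℕ) : gaussianMoment (n + 1) = n * gaussianMoment (n - 1) := by
  have hintegrable := ((integrable_pow_mul_gaussian (n - 1)).const_mul (n : ℝ)).sub
    (integrable_pow_mul_gaussian (n + 1))
  have h := integral_of_hasDerivAt_of_tendsto (hasDerivAt_pow_mul_gaussian n) hintegrable
    (tendsto_pow_mul_gaussian_atBot _) (tendsto_pow_mul_gaussian_atTop _)
  rw [integral_sub ((integrable_pow_mul_gaussian _).const_mul _) (integrable_pow_mul_gaussian _),
    integral_const_mul, sub_zero] at h
  unfold gaussianMoment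
  linarith

lemma radialGaussianMoment_eq_gamma (k : ℕ) :
    radialGaussianMoment k = (1 / 2) ^ (-((k + 1) / 2 : ℝ)) * (1 / 2) * Gamma ((k + 1) / 2) := by
  have h := integral_rpow_mul_exp_neg_mul_rpow (p := 2) (q := k) (b := 1 / 2) two_pos
    (by linarith [k.cast_nonneg (α := ℝ)]) (by norm_num)
  rw [neg_div] at h
  rw [radialGaussianMoment, ← h]
  refine setIntegral_congr_fun measurableSet_Ioi fun r _ => ?_
  simp only [rpow_natCast, rpow_two]

lemma radialGaussianMoment_pos (k : ℕ) : 0 < radialGaussianMoment k := by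
  rw [radialGaussianMoment_eq_gamma]
  have := Gamma_pos_of_pos (s := (k + 1) / 2) (by positivity)
  positivity

lemma radialGaussianMoment_add_two (k : ℕ) :
    radialGaussianMoment (k + 2) = (k + 1) * radialGaussianMoment k := by
  have hk : ((k + 2 : ℕ) + 1) / 2 = ((k : ℝ) + 1) / 2 + 1 := by push_cast; ring
  rw [radialGaussianMoment_eq_gamma, radialGaussianMoment_eq_gamma, hk,
    Gamma_add_one (by positivity), neg_add, rpow_add (by norm_num), rpow_neg_one]
  ring

theorem integral_homogeneous_mul_radial {E : Type*} [NormedAddCommGroup E] [NormedSpace ℝ E]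
    [FiniteDimensional ℝ E] [MeasurableSpace E] [BorelSpace E] [Nontrivial E]
    (μ : Measure E) [μ.IsAddHaarMeasure] {g : E → ℝ} {k : ℕ}
    (hg : ∀ x : E, ∀ r : ℝ, 0 < r → g (r • x) = r ^ k * g x) (h : ℝ → ℝ) :
    ∫ x, g x * h ‖x‖ ∂μ =
      (∫ ω : sphere (0 : E) 1, g ω ∂μ.toSphere) *
        ∫ r in Ioi (0 : ℝ), r ^ (k + Module.finrank ℝ E - 1) * h r := by
  set n := Module.finrank ℝ E - 1
  calc ∫ x, g x * h ‖x‖ ∂μ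
      = ∫ x : ({0}ᶜ : Set E), g x * h ‖(x : E)‖ ∂μ.comap (↑) := by
        rw [integral_subtype_comap (measurableSet_singleton _).compl (fun x => g x * h ‖x‖),
          restrict_compl_singleton]
    _ = ∫ z : sphere (0 : E) 1 × Ioi (0 : ℝ), g z.1 * ((z.2 : ℝ) ^ k * h z.2)
          ∂μ.toSphere.prod (.volumeIoiPow n) := by
        rw [← μ.measurePreserving_homeomorphUnitSphereProd.integral_comp
          (Homeomorph.measurableEmbedding _)]
        refine integral_congr_ae (.of_forall fun x => ?_)
        have hpolar := hg (‖(x : E)‖⁻¹ • (x : E)) ‖(x : E)‖ (norm_pos_iff.2 x.2)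
        rw [smul_inv_smul₀ (norm_ne_zero_iff.2 x.2)] at hpolar
        simp only [homeomorphUnitSphereProd_apply_fst_coe, homeomorphUnitSphereProd_apply_snd_coe]
        rw [hpolar]
        ring
    _ = (∫ ω : sphere (0 : E) 1, g ω ∂μ.toSphere) *
          ∫ r : Ioi (0 : ℝ), (r : ℝ) ^ k * h r ∂.volumeIoiPow n :=
        integral_prod_mul (fun ω : sphere (0 : E) 1 => g ω) fun r : Ioi (0 : ℝ) => (r : ℝ) ^ k * h r
    _ = _ := by
        congr 1
        simp only [Measure.volumeIoiPow, ENNReal.ofReal]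
        rw [integral_withDensity_eq_integral_smul
            ((measurable_subtype_coe.pow_const _).real_toNNReal),
          integral_subtype_comap measurableSet_Ioi
            fun a => Real.toNNReal (a ^ n) • (a ^ k * h a)]
        refine setIntegral_congr_fun measurableSet_Ioi fun r hr => ?_
        have hE : 0 < Module.finrank ℝ E := Module.finrank_pos
        rw [NNReal.smul_def, Real.coe_toNNReal _ (pow_nonneg hr.out.le _), smul_eq_mul,
          show k + Module.finrank ℝ E - 1 = n + k by omega, pow_add]
        ring

noncomputable abbrev evalReal {ι : Type*} (x : EuclideanSpace ℝ ι) : MvPolynomial ι ℂ →+* ℂ :=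
  eval fun j => (x j : ℂ)

lemma evalReal_map_conj {ι : Type*} (x : EuclideanSpace ℝ ι) (f : MvPolynomial ι ℂ) :
    evalReal x (map (starRingEnd ℂ) f) = starRingEnd ℂ (evalReal x f) := by
  rw [evalReal, eval_map, eval, coe_eval₂Hom, hom_eval₂, RingHom.comp_id]
  simp only [Complex.conj_ofReal]

section GaussianIntegral

variable {ι : Type*} [Fintype ι]

lemma evalReal_monomial_mul_gaussian_toLp (α : ι →₀ ℕ) (c : ℂ) (y : ι → ℝ) :
    evalReal (WithLp.toLp 2 y) (monomial α c) * rexp (-(1 / 2) * ‖WithLp.toLp 2 y‖ ^ 2) =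
      c * ∏ j, ((y j ^ α j * rexp (-(1 / 2) * y j ^ 2) : ℝ) : ℂ) := by
  rw [EuclideanSpace.norm_eq, sq_sqrt (by positivity), Finset.mul_sum, exp_sum, eval_monomial,
    Finsupp.prod_fintype _ _ fun _ => pow_zero _, mul_assoc]
  simp only [Real.norm_eq_abs, sq_abs, Complex.ofReal_prod, Complex.ofReal_mul,
    Complex.ofReal_pow, ← Finset.prod_mul_distrib]

lemma integrable_evalReal_monomial_mul_gaussian (α : ι →₀ ℕ) (c : ℂ) :
    Integrable fun x : EuclideanSpace ℝ ι =>
      evalReal x (monomial α c) * rexp (-(1 / 2) * ‖x‖ ^ 2) := by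
  rw [← (PiLp.volume_preserving_toLp ι).integrable_comp_emb
    (MeasurableEquiv.toLp 2 (ι → ℝ)).measurableEmbedding]
  simp only [Function.comp_def, evalReal_monomial_mul_gaussian_toLp]
  exact (Integrable.fintype_prod
    (f := fun j (t : ℝ) => ((t ^ α j * rexp (-(1 / 2) * t ^ 2) : ℝ) : ℂ))
    fun j => (integrable_pow_mul_gaussian (α j)).ofReal).const_mul c

lemma integrable_evalReal_mul_gaussian (f : MvPolynomial ι ℂ) :
    Integrable fun x : EuclideanSpace ℝ ι => evalReal x f * rexp (-(1 / 2) * ‖x‖ ^ 2) := by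
  induction f using MvPolynomial.induction_on' with
  | monomial α c => exact integrable_evalReal_monomial_mul_gaussian α c
  | add f g hf hg =>
    simp only [map_add, add_mul]
    exact hf.add hg

noncomputable def gaussianIntegral : MvPolynomial ι ℂ →ₗ[ℂ] ℂ where
  toFun f := ∫ x : EuclideanSpace ℝ ι, evalReal x f * rexp (-(1 / 2) * ‖x‖ ^ 2)
  map_add' f g := by
    simp only [map_add, add_mul]
    exact integral_add (integrable_evalReal_mul_gaussian f) (integrable_evalReal_mul_gaussian g)
  map_smul' c f := by
    simp only [smul_eval, mul_assoc, integral_const_mul, RingHom.id_apply, smul_eq_mul]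

lemma gaussianIntegral_apply (f : MvPolynomial ι ℂ) :
    gaussianIntegral f = ∫ x : EuclideanSpace ℝ ι, evalReal x f * rexp (-(1 / 2) * ‖x‖ ^ 2) :=
  rfl

lemma gaussianIntegral_monomial (α : ι →₀ ℕ) (c : ℂ) :
    gaussianIntegral (monomial α c) = c * ∏ j, (gaussianMoment (α j) : ℂ) := by
  rw [gaussianIntegral_apply, ← (PiLp.volume_preserving_toLp ι).integral_comp
    (MeasurableEquiv.toLp 2 (ι → ℝ)).measurableEmbedding]
  simp only [evalReal_monomial_mul_gaussian_toLp, integral_const_mul]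
  rw [integral_fintype_prod_volume_eq_prod
    (fun j (t : ℝ) => ((t ^ α j * rexp (-(1 / 2) * t ^ 2) : ℝ) : ℂ))]
  exact congrArg (c * ·) (Finset.prod_congr rfl fun j _ => integral_ofReal)

lemma gaussianIntegral_pderiv (j : ι) (f : MvPolynomial ι ℂ) :
    gaussianIntegral (pderiv j f) = gaussianIntegral (X j * f) := by
  classical
  induction f using MvPolynomial.induction_on' with
  | monomial α c =>
    have hoff : ∀ k ∈ ({j}ᶜ : Finset ι),
        gaussianMoment ((α - Finsupp.single j 1 : ι →₀ ℕ) k) =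
          gaussianMoment ((Finsupp.single j 1 + α : ι →₀ ℕ) k) := fun k hk => by
      have hjk : j ≠ k := fun h => by simp [h] at hk
      simp [Finsupp.single_eq_of_ne' hjk]
    rw [pderiv_monomial, X, monomial_mul, one_mul, gaussianIntegral_monomial,
      gaussianIntegral_monomial, Fintype.prod_eq_mul_prod_compl j,
      Fintype.prod_eq_mul_prod_compl j, Finset.prod_congr rfl fun k hk => by rw [hoff k hk]]
    simp only [Finsupp.coe_tsub, Pi.sub_apply, Finsupp.single_eq_same, Finsupp.add_apply,
      add_comm 1 (α j), gaussianMoment_succ]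
    push_cast
    ring
  | add f g hf hg => simp only [map_add, mul_add, hf, hg]

noncomputable def gaussianNormSq (f : MvPolynomial ι ℂ) : ℝ :=
  ∫ x : EuclideanSpace ℝ ι, ‖evalReal x f‖ ^ 2 * rexp (-(1 / 2) * ‖x‖ ^ 2)

noncomputable def sphereNormSq (f : MvPolynomial ι ℂ) : ℝ :=
  ∫ ω : sphere (0 : EuclideanSpace ℝ ι) 1, ‖evalReal ω f‖ ^ 2 ∂volume.toSphere

lemma sphereNormSq_nonneg (f : MvPolynomial ι ℂ) : 0 ≤ sphereNormSq f :=
  integral_nonneg fun _ => by positivity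

lemma ofReal_gaussianNormSq (f : MvPolynomial ι ℂ) :
    (gaussianNormSq f : ℂ) = gaussianIntegral (f * map (starRingEnd ℂ) f) := by
  rw [gaussianNormSq, gaussianIntegral_apply, ← integral_complex_ofReal]
  congr 1 with x
  rw [map_mul, evalReal_map_conj, Complex.mul_conj, Complex.normSq_eq_norm_sq]
  push_cast
  rfl

lemma gaussianNormSq_eq_sphereNormSq_mul [Nonempty ι] {f : MvPolynomial ι ℂ} {d : ℕ}
    (hf : f.IsHomogeneous d) :
    gaussianNormSq f = sphereNormSq f * radialGaussianMoment (2 * d + Fintype.card ι - 1) := by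
  have hscale : ∀ x : EuclideanSpace ℝ ι, ∀ r : ℝ, 0 < r →
      ‖evalReal (r • x) f‖ ^ 2 = r ^ (2 * d) * ‖evalReal x f‖ ^ 2 := fun x r hr => by
    have hx : (fun j => ((r • x) j : ℂ)) = (r : ℂ) • fun j => (x j : ℂ) := by
      ext j
      simp
    rw [evalReal, hx, hf.eval_smul, norm_mul, norm_pow, Complex.norm_real,
      Real.norm_of_nonneg hr.le]
    ring
  have h := integral_homogeneous_mul_radial volume (g := fun x => ‖evalReal x f‖ ^ 2) hscale
    fun r => rexp (-(1 / 2) * r ^ 2)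
  rwa [finrank_euclideanSpace] at h

end GaussianIntegral

section Harmonic

variable {N : ℕ}

lemma polyLap_apply (f : MvPolynomial (Fin N) ℂ) : polyLap f = ∑ j, pderiv j (pderiv j f) := by
  simp [polyLap, LinearMap.sum_apply]

lemma polyLap_pderiv (j : Fin N) (f : MvPolynomial (Fin N) ℂ) :
    polyLap (pderiv j f) = pderiv j (polyLap f) := by
  simp only [polyLap_apply, map_sum, pderiv_pderiv_comm _ j]

lemma polyLap_map_conj (f : MvPolynomial (Fin N) ℂ) :
    polyLap (map (starRingEnd ℂ) f) = map (starRingEnd ℂ) (polyLap f) := by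
  simp only [polyLap_apply, map_sum, pderiv_map]

lemma polyLap_iteratedPDeriv {p : MvPolynomial (Fin N) ℂ} (hharm : polyLap p = 0)
    (l : List (Fin N)) : polyLap (iteratedPDeriv l p) = 0 := by
  induction l with
  | nil => exact hharm
  | cons j l ih => rw [iteratedPDeriv_cons, polyLap_pderiv, ih, map_zero]

lemma sum_gaussianIntegral_pderiv_mul_conj {p : MvPolynomial (Fin N) ℂ} {m : ℕ}
    (hhom : p.IsHomogeneous m) (hharm : polyLap p = 0) :
    ∑ j, gaussianIntegral (pderiv j p * map (starRingEnd ℂ) (pderiv j p)) =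
      m * gaussianIntegral (p * map (starRingEnd ℂ) p) := by
  set q := map (starRingEnd ℂ) p
  have hq : ∑ j, pderiv j (pderiv j q) = 0 := by
    rw [← polyLap_apply, polyLap_map_conj, hharm, map_zero]
  have hparts : ∀ j, pderiv j p * map (starRingEnd ℂ) (pderiv j p) =
      pderiv j (p * pderiv j q) - p * pderiv j (pderiv j q) := fun j => by
    rw [← pderiv_map, pderiv_mul]
    ring
  calc ∑ j, gaussianIntegral (pderiv j p * map (starRingEnd ℂ) (pderiv j p))
      = gaussianIntegral (p * ∑ j, X j * pderiv j q) -
          gaussianIntegral (p * ∑ j, pderiv j (pderiv j q)) := by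
        simp only [hparts, map_sub, Finset.sum_sub_distrib, gaussianIntegral_pderiv,
          Finset.mul_sum, map_sum, mul_left_comm (X _) p]
    _ = m * gaussianIntegral (p * q) := by
        rw [(hhom.map _).sum_X_mul_pderiv, hq, mul_zero, map_zero, sub_zero, mul_smul_comm,
          map_nsmul, nsmul_eq_mul]

lemma sum_gaussianNormSq_pderiv {p : MvPolynomial (Fin N) ℂ} {m : ℕ}
    (hhom : p.IsHomogeneous m) (hharm : polyLap p = 0) :
    ∑ j, gaussianNormSq (pderiv j p) = m * gaussianNormSq p := by
  have h := sum_gaussianIntegral_pderiv_mul_conj hhom hharm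
  simp only [← ofReal_gaussianNormSq] at h
  exact_mod_cast h

lemma sum_sphereNormSq_pderiv (hN : 0 < N) {p : MvPolynomial (Fin N) ℂ} {m : ℕ}
    (hhom : p.IsHomogeneous (m + 1)) (hharm : polyLap p = 0) :
    ∑ j, sphereNormSq (pderiv j p) = (m + 1) * (2 * m + N) * sphereNormSq p := by
  have : Nonempty (Fin N) := ⟨⟨0, hN⟩⟩
  set c := radialGaussianMoment (2 * m + N - 1)
  have hj : ∀ j, gaussianNormSq (pderiv j p) = sphereNormSq (pderiv j p) * c := fun j => by
    simpa using gaussianNormSq_eq_sphereNormSq_mul (hhom.pderiv (i := j))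
  have hp : gaussianNormSq p = (2 * m + N) * c * sphereNormSq p := by
    have hk : ((2 * m + N - 1 : ℕ) : ℝ) + 1 = 2 * m + N := by
      rw [Nat.cast_sub (by omega)]
      push_cast
      ring
    rw [gaussianNormSq_eq_sphereNormSq_mul hhom, Fintype.card_fin,
      show 2 * (m + 1) + N - 1 = 2 * m + N - 1 + 2 by omega, radialGaussianMoment_add_two, hk]
    ring
  have hsum := sum_gaussianNormSq_pderiv hhom hharm
  simp only [hj, hp, ← Finset.sum_mul] at hsum
  push_cast at hsum
  apply mul_right_cancel₀ (radialGaussianMoment_pos (2 * m + N - 1)).ne'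
  linear_combination hsum

lemma sphereNormSq_pderiv_le {p : MvPolynomial (Fin N) ℂ} {m : ℕ}
    (hhom : p.IsHomogeneous (m + 1)) (hharm : polyLap p = 0) (j : Fin N) :
    sphereNormSq (pderiv j p) ≤ (m + 1) * (2 * m + N) * sphereNormSq p := by
  rw [← sum_sphereNormSq_pderiv j.pos hhom hharm]
  exact Finset.single_le_sum (fun i _ => sphereNormSq_nonneg (pderiv i p)) (Finset.mem_univ j)

lemma sphereNormSq_iteratedPDeriv_le {m : ℕ} {p : MvPolynomial (Fin N) ℂ}
    (hhom : p.IsHomogeneous m) (hharm : polyLap p = 0) {l : List (Fin N)} (hl : l.length ≤ m) :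
    sphereNormSq (iteratedPDeriv l p) ≤
      (2 * m) ^ l.length * fallingFactorial (m + N / 2 - 1) l.length * sphereNormSq p := by
  induction l with
  | nil => simp [fallingFactorial]
  | cons j l ih =>
    simp only [List.length_cons] at hl ⊢
    obtain ⟨d, hd⟩ : ∃ d, m - l.length = d + 1 := ⟨m - l.length - 1, by omega⟩
    have hdm : (d : ℝ) + 1 + l.length = m := by exact_mod_cast (by omega : d + 1 + l.length = m)
    have hq := hhom.iteratedPDeriv l
    rw [hd] at hq
    have hC : 0 ≤ (2 * m : ℝ) ^ l.length * fallingFactorial (m + N / 2 - 1) l.length :=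
      mul_nonneg (by positivity) (fallingFactorial_nonneg (by linarith [N.cast_nonneg (α := ℝ)]))
    have hfactor : ((d : ℝ) + 1) * (2 * d + N) ≤ 2 * m * (m + N / 2 - 1 - l.length) := by
      nlinarith [N.cast_nonneg (α := ℝ), d.cast_nonneg (α := ℝ)]
    calc sphereNormSq (iteratedPDeriv (j :: l) p)
        ≤ ((d : ℝ) + 1) * (2 * d + N) * sphereNormSq (iteratedPDeriv l p) :=
          sphereNormSq_pderiv_le hq (polyLap_iteratedPDeriv hharm l) j
      _ ≤ ((d : ℝ) + 1) * (2 * d + N) *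
            ((2 * m) ^ l.length * fallingFactorial (m + N / 2 - 1) l.length * sphereNormSq p) :=
          mul_le_mul_of_nonneg_left (ih (by omega)) (by positivity)
      _ ≤ 2 * m * (m + N / 2 - 1 - l.length) *
            ((2 * m) ^ l.length * fallingFactorial (m + N / 2 - 1) l.length * sphereNormSq p) :=
          mul_le_mul_of_nonneg_right hfactor (mul_nonneg hC (sphereNormSq_nonneg p))
      _ = _ := by
          rw [fallingFactorial_succ, pow_succ]
          ring

end Harmonic

lemma sphL2_eq_sqrt_sphereNormSq {N : ℕ} (p : MvPolynomial (Fin N) ℂ) :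
    sphL2 p = √(sphereNormSq p) :=
  rfl

theorem stmt7 (N : ℕ) (m : ℕ) (p : MvPolynomial (Fin N) ℂ)
    (hhom : p.IsHomogeneous m) (hharm : polyLap p = 0) (γ : Fin N → ℕ) :
    ((∑ j, γ j) ≤ m →
      sphL2 (mderiv γ p) ≤
        Real.sqrt ((2 * (m : ℝ)) ^ (∑ j, γ j) *
          fallingFactorial ((m : ℝ) + (N : ℝ) / 2 - 1) (∑ j, γ j)) * sphL2 p) ∧
    (m < (∑ j, γ j) → mderiv γ p = 0) := by
  rw [mderiv_eq_iteratedPDeriv, ← length_flatMap_replicate]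
  refine ⟨fun hle => ?_, fun hlt => iteratedPDeriv_eq_zero_of_lt hhom hlt⟩
  rw [sphL2_eq_sqrt_sphereNormSq, sphL2_eq_sqrt_sphereNormSq,
    ← Real.sqrt_mul' _ (sphereNormSq_nonneg p)]
  exact Real.sqrt_le_sqrt (sphereNormSq_iteratedPDeriv_le hhom hharm hle)
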